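/- Let X be a coherent configuration of degree n, maximal valency k, and indistinguishing number c, and fix a point μ. For a point α, let Λ(α) be the set of points β such that c_{x r y} ≠ 1 where x = r(μ,α), y = r(μ,β), r = r(α,β) (i.e. the intersection number c_{xr}^y ≥ 2). Then |Λ(α)| ≤ (1/2)·c·k·(k-1). -/

import Mathlib

open Finset

structure CoherentConfiguration (Ω : Type*) [Fintype Ω] [DecidableEq Ω] where
  S : Set (Finset (Ω × Ω))
  nonempty_mem : ∀ s ∈ S, s.Nonempty
  cover : ∀ p : Ω × Ω, ∃ s ∈ S, p ∈ s
  pairwise_disjoint : ∀ s ∈ S, ∀ t ∈ S, s ≠ t → ∀ p : Ω × Ω, p ∈ s → p ∉ t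
  diag_union : ∀ s ∈ S, ∀ p ∈ s, p.1 = p.2 → ∀ q ∈ s, q.1 = q.2
  conv_mem : ∀ s ∈ S, s.image (fun p => (p.2, p.1)) ∈ S
  inter_const : ∀ r ∈ S, ∀ s ∈ S, ∀ t ∈ S, ∀ p ∈ t, ∀ q ∈ t,
    (Finset.univ.filter fun γ => (p.1, γ) ∈ r ∧ (γ, p.2) ∈ s).card =
    (Finset.univ.filter fun γ => (q.1, γ) ∈ r ∧ (γ, q.2) ∈ s).card

namespace CoherentConfiguration

variable {Ω : Type*} [Fintype Ω] [DecidableEq Ω]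
variable {Ω' : Type*} [Fintype Ω'] [DecidableEq Ω']

/-- The converse relation `r*`. -/
def conv (r : Finset (Ω × Ω)) : Finset (Ω × Ω) := r.image fun p => (p.2, p.1)

/-- The intersection number `c_{rs}^t`, computed at a chosen pair of `t`. -/
noncomputable def interNum (r s t : Finset (Ω × Ω)) : ℕ :=
  if h : t.Nonempty then
    (Finset.univ.filter fun γ => (h.choose.1, γ) ∈ r ∧ (γ, h.choose.2) ∈ s).card
  else 0

/-- The valency `n_s`, computed at a chosen point in the domain of `s`. -/
noncomputable def valency (s : Finset (Ω × Ω)) : ℕ :=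
  if h : s.Nonempty then (Finset.univ.filter fun β : Ω => (h.choose.1, β) ∈ s).card
  else 0

/-- The complex product `rs`: the set of basis relations `t` with `c_{rs}^t ≠ 0`. -/
def cprod (C : CoherentConfiguration Ω) (r s : Finset (Ω × Ω)) : Set (Finset (Ω × Ω)) :=
  {t | t ∈ C.S ∧ interNum r s t ≠ 0}

/-- The maximal valency of a coherent configuration. -/
noncomputable def maxValency (C : CoherentConfiguration Ω) : ℕ :=
  sSup {n | ∃ s ∈ C.S, n = valency s}

/-- The set `c(α,β) = {γ : r(γ,α) = r(γ,β)}`. -/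
def indisSet (C : CoherentConfiguration Ω) (α β : Ω) : Set Ω :=
  {γ | ∀ s ∈ C.S, ((γ, α) ∈ s ↔ (γ, β) ∈ s)}

/-- The indistinguishing number of a coherent configuration. -/
noncomputable def indisNum (C : CoherentConfiguration Ω) : ℕ :=
  sSup {n | ∃ α β : Ω, α ≠ β ∧ n = (C.indisSet α β).ncard}

/-- The (a) basis relation containing the pair `(α,β)`. -/
noncomputable def rel (C : CoherentConfiguration Ω) (α β : Ω) : Finset (Ω × Ω) :=
  (C.cover (α, β)).choose

/-- `D` is a fission of `C`: every basis relation of `C` is a union of basis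
relations of `D`. -/
def IsFission (C D : CoherentConfiguration Ω) : Prop :=
  ∀ s ∈ C.S, ∃ T ⊆ D.S, (s : Set (Ω × Ω)) = ⋃ t ∈ T, (t : Set (Ω × Ω))

/-- `φ` is an algebraic isomorphism from `C` onto `C'`. -/
def IsAlgIso (C : CoherentConfiguration Ω) (C' : CoherentConfiguration Ω')
    (φ : Finset (Ω × Ω) → Finset (Ω' × Ω')) : Prop :=
  Set.BijOn φ C.S C'.S ∧
  ∀ r ∈ C.S, ∀ s ∈ C.S, ∀ t ∈ C.S, interNum r s t = interNum (φ r) (φ s) (φ t)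

end CoherentConfiguration

open CoherentConfiguration

/-!
If `c_{xr}^y ≠ 1` with `x = r(μ,α)`, `r = r(α,β)`, `y = r(μ,β)`, then, besides `α` itself, some
`α' ∈ μx` satisfies `r(α',β) = r(α,β)`; passing to converses, `β ∈ c(α,α')`. Hence `Λ(α)` is
covered by the `n_x - 1 ≤ k - 1` sets `c(α,α')`, `α' ∈ μx \ {α}`, each of size at most `c`, and
`2(k-1) ≤ k(k-1)`.
-/

namespace CoherentConfiguration

variable {Ω : Type*} [Fintype Ω] [DecidableEq Ω] (C : CoherentConfiguration Ω)

/-- The set `αs` of the paper. -/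
def neighbors (s : Finset (Ω × Ω)) (α : Ω) : Finset Ω :=
  univ.filter fun β => (α, β) ∈ s

omit [Fintype Ω] in
@[simp]
lemma mem_conv {s : Finset (Ω × Ω)} {α β : Ω} : (α, β) ∈ conv s ↔ (β, α) ∈ s := by
  simp [conv]

lemma conv_mem_S {s : Finset (Ω × Ω)} (hs : s ∈ C.S) : conv s ∈ C.S :=
  C.conv_mem s hs

lemma rel_mem_S (α β : Ω) : C.rel α β ∈ C.S :=
  (C.cover (α, β)).choose_spec.1

lemma mem_rel (α β : Ω) : (α, β) ∈ C.rel α β :=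
  (C.cover (α, β)).choose_spec.2

lemma eq_of_mem_of_mem {s t : Finset (Ω × Ω)} (hs : s ∈ C.S) (ht : t ∈ C.S) {p : Ω × Ω}
    (hps : p ∈ s) (hpt : p ∈ t) : s = t := by
  by_contra h
  exact C.pairwise_disjoint s hs t ht h p hps hpt

lemma mem_iff_mem_of_mem {r s : Finset (Ω × Ω)} (hr : r ∈ C.S) (hs : s ∈ C.S) {p q : Ω × Ω}
    (hp : p ∈ r) (hq : q ∈ r) : p ∈ s ↔ q ∈ s := by
  constructor
  · intro h
    exact C.eq_of_mem_of_mem hr hs hp h ▸ hq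
  · intro h
    exact C.eq_of_mem_of_mem hr hs hq h ▸ hp

lemma mem_indisSet_of_mem {r : Finset (Ω × Ω)} (hr : r ∈ C.S) {α α' β : Ω}
    (hα : (α, β) ∈ r) (hα' : (α', β) ∈ r) : β ∈ C.indisSet α α' := by
  intro s hs
  simpa using C.mem_iff_mem_of_mem hr (C.conv_mem_S hs) hα hα'

lemma interNum_eq_card {r s t : Finset (Ω × Ω)} (hr : r ∈ C.S) (hs : s ∈ C.S) (ht : t ∈ C.S)
    {α β : Ω} (h : (α, β) ∈ t) :
    interNum r s t = (univ.filter fun γ => (α, γ) ∈ r ∧ (γ, β) ∈ s).card := by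
  have hne : t.Nonempty := ⟨_, h⟩
  rw [interNum, dif_pos hne]
  exact C.inter_const r hr s hs t ht _ hne.choose_spec _ h

lemma exists_ne_of_interNum_ne_one {r s t : Finset (Ω × Ω)} (hr : r ∈ C.S) (hs : s ∈ C.S)
    (ht : t ∈ C.S) {α β γ : Ω} (h : (α, β) ∈ t) (hγr : (α, γ) ∈ r) (hγs : (γ, β) ∈ s)
    (hne : interNum r s t ≠ 1) : ∃ γ' ≠ γ, (α, γ') ∈ r ∧ (γ', β) ∈ s := by
  rw [C.interNum_eq_card hr hs ht h] at hne
  have hγ : γ ∈ univ.filter fun γ => (α, γ) ∈ r ∧ (γ, β) ∈ s := by simp [hγr, hγs]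
  have hlt : 1 < (univ.filter fun γ => (α, γ) ∈ r ∧ (γ, β) ∈ s).card := by
    have := card_pos.mpr ⟨γ, hγ⟩
    omega
  obtain ⟨γ', hγ', hne'⟩ := exists_mem_ne hlt γ
  exact ⟨γ', hne', by simpa using hγ'⟩

/- At `(μ,a)` the number `c_{r(μ,μ) x}^x` counts `γ = μ`, so it is positive, hence also at `(δ,e)`:
some `(δ,γ)` lies in the diagonal relation `r(μ,μ)`. -/
lemma diag_mem_rel_of_mem {x : Finset (Ω × Ω)} (hx : x ∈ C.S) {μ δ a e : Ω}
    (hμ : (μ, a) ∈ x) (hδ : (δ, e) ∈ x) : (δ, δ) ∈ C.rel μ μ := by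
  have hdiag : ∀ p ∈ C.rel μ μ, p.1 = p.2 :=
    fun p hp => C.diag_union _ (C.rel_mem_S μ μ) _ (C.mem_rel μ μ) rfl p hp
  have hcard := C.inter_const _ (C.rel_mem_S μ μ) x hx x hx _ hμ _ hδ
  have hpos : 0 < (univ.filter fun γ => (δ, γ) ∈ C.rel μ μ ∧ (γ, e) ∈ x).card := by
    rw [← hcard]
    exact card_pos.mpr ⟨μ, by simp [C.mem_rel μ μ, hμ]⟩
  obtain ⟨γ, hγ⟩ := card_pos.mp hpos
  have hγδ : (δ, γ) ∈ C.rel μ μ := (mem_filter.mp hγ).2.1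
  obtain rfl : δ = γ := hdiag _ hγδ
  exact hγδ

lemma card_neighbors_eq {x : Finset (Ω × Ω)} (hx : x ∈ C.S) {μ δ a e : Ω}
    (hμ : (μ, a) ∈ x) (hδ : (δ, e) ∈ x) : (neighbors x μ).card = (neighbors x δ).card := by
  have := C.inter_const x hx (conv x) (C.conv_mem_S hx) _ (C.rel_mem_S μ μ) _ (C.mem_rel μ μ)
    _ (C.diag_mem_rel_of_mem hx hμ hδ)
  simpa [neighbors] using this

lemma card_neighbors_eq_valency {x : Finset (Ω × Ω)} (hx : x ∈ C.S) {μ a : Ω}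
    (h : (μ, a) ∈ x) : (neighbors x μ).card = valency x := by
  have hne : x.Nonempty := ⟨_, h⟩
  rw [valency, dif_pos hne]
  exact C.card_neighbors_eq hx h hne.choose_spec

lemma valency_le_card (s : Finset (Ω × Ω)) : valency s ≤ Fintype.card Ω := by
  unfold valency
  split
  · exact (card_filter_le _ _).trans_eq card_univ
  · exact Nat.zero_le _

lemma valency_le_maxValency {s : Finset (Ω × Ω)} (hs : s ∈ C.S) : valency s ≤ C.maxValency :=
  le_csSup ⟨Fintype.card Ω, by rintro n ⟨t, -, rfl⟩; exact valency_le_card t⟩ ⟨s, hs, rfl⟩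

lemma ncard_indisSet_le_indisNum {α β : Ω} (h : α ≠ β) :
    (C.indisSet α β).ncard ≤ C.indisNum :=
  le_csSup ⟨Nat.card Ω, by rintro n ⟨_, _, -, rfl⟩; exact Set.ncard_le_card _⟩ ⟨α, β, h, rfl⟩

lemma setOf_interNum_ne_one_subset (μ α : Ω) :
    {β | interNum (C.rel μ α) (C.rel α β) (C.rel μ β) ≠ 1} ⊆
      ⋃ α' ∈ (neighbors (C.rel μ α) μ).erase α, C.indisSet α α' := by
  intro β hβ
  obtain ⟨α', hne, hμα', hα'β⟩ := C.exists_ne_of_interNum_ne_one (C.rel_mem_S μ α)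
    (C.rel_mem_S α β) (C.rel_mem_S μ β) (C.mem_rel μ β) (C.mem_rel μ α) (C.mem_rel α β) hβ
  simp only [Set.mem_iUnion]
  exact ⟨α', by simp [neighbors, hne, hμα'],
    C.mem_indisSet_of_mem (C.rel_mem_S α β) (C.mem_rel α β) hα'β⟩

lemma ncard_setOf_interNum_ne_one_le (μ α : Ω) :
    {β | interNum (C.rel μ α) (C.rel α β) (C.rel μ β) ≠ 1}.ncard ≤
      (C.maxValency - 1) * C.indisNum := by
  set M := neighbors (C.rel μ α) μ
  have hM : M.card ≤ C.maxValency :=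
    (C.card_neighbors_eq_valency (C.rel_mem_S μ α) (C.mem_rel μ α)).trans_le
      (C.valency_le_maxValency (C.rel_mem_S μ α))
  calc _ ≤ (⋃ α' ∈ M.erase α, C.indisSet α α').ncard :=
        Set.ncard_le_ncard (C.setOf_interNum_ne_one_subset μ α) (Set.toFinite _)
    _ ≤ ∑ α' ∈ M.erase α, (C.indisSet α α').ncard := set_ncard_biUnion_le _ _
    _ ≤ (M.erase α).card * C.indisNum := by
        refine (sum_le_card_nsmul _ _ _ fun α' hα' => ?_).trans_eq (smul_eq_mul _ _)
        exact C.ncard_indisSet_le_indisNum (ne_of_mem_erase hα').symm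
    _ ≤ (C.maxValency - 1) * C.indisNum := by
        have hα : α ∈ M := by simp [M, neighbors, C.mem_rel μ α]
        gcongr
        rw [card_erase_of_mem hα]
        omega

end CoherentConfiguration

theorem bad_set_bound {Ω : Type*} [Fintype Ω] [DecidableEq Ω]
    (C : CoherentConfiguration Ω) (μ α : Ω) :
    2 * {β : Ω | interNum (C.rel μ α) (C.rel α β) (C.rel μ β) ≠ 1}.ncard ≤
      C.indisNum * C.maxValency * (C.maxValency - 1) := by
  set k := C.maxValency
  have hk : 2 * (k - 1) ≤ k * (k - 1) := by
    rcases Nat.lt_or_ge k 2 with hlt | hge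
    · simp [show k - 1 = 0 by omega]
    · exact Nat.mul_le_mul_right _ hge
  calc 2 * {β : Ω | interNum (C.rel μ α) (C.rel α β) (C.rel μ β) ≠ 1}.ncard
      ≤ 2 * ((k - 1) * C.indisNum) := by
        gcongr
        exact C.ncard_setOf_interNum_ne_one_le μ α
    _ = 2 * (k - 1) * C.indisNum := by ring
    _ ≤ k * (k - 1) * C.indisNum := Nat.mul_le_mul_right _ hk
    _ = C.indisNum * k * (k - 1) := by ring
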